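/- arXiv:2204.04709 — 2 statements merged into one kernel-verified Lean document; each statement's English description precedes it below -/
import Mathlib

section
/- Let a,b ∈ ℝ, c not a nonpositive integer, and define v_n by ln(1-x)·F(a,b;c;x) = Σ_{n≥0} v_n x^n for |x| < 1. Then v_0 = 0, v_1 = -1, and for n ≥ 1 (with n+a-1, n+b-1 ≠ 0), v_{n+1} = 2α_n v_n - β_n v_{n-1} + γ_n w_n, where w_n = (a)_n(b)_n/(n!(c)_n), α_n = (2n² + (a+b+c-1)n + ab)/(2(n+1)(n+c)), β_n = (n+a-1)(n+b-1)/((n+1)(n+c)), and γ_n = [(c-a-b)n² + (a+b-2ab)n - c(a-1)(b-1)]/((n+1)(n+a-1)(n+b-1)(n+c)). -/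
open Polynomial

/-- Pochhammer symbol `(a)_n` for real `a`. -/
noncomputable def poch (a : ℝ) (n : ℕ) : ℝ := (ascPochhammer ℝ n).eval a

/-- Gaussian hypergeometric function `F(a,b;c;z)`. -/
noncomputable def hypF (a b c z : ℝ) : ℝ :=
  ∑' n : ℕ, poch a n * poch b n / poch c n * z ^ n / n.factorial

/-!
The coefficients `w k` are hypergeometric: `(k+1)(k+c) w (k+1) = (k+a)(k+b) w k`. In the
combination `(n+1)(n+c) v (n+1) - (2n² + (a+b+c-1)n + ab) v n + (n+a-1)(n+b-1) v (n-1)`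
the recurrence turns the contribution of each `w k` with `k < n - 1` into a difference
`D (k+1) - D k`, where `D k = k (k+c-1) w k / ((n-k)(n+1-k))`. The sum telescopes, leaving
only multiples of `w (n-1)` and `w n`, and one more use of the recurrence expresses
everything through `w n`.
-/

open Finset

lemma poch_succ (a : ℝ) (n : ℕ) : poch a (n + 1) = poch a n * (a + n) :=
  ascPochhammer_succ_eval n a

lemma poch_ne_zero {c : ℝ} (hc : ∀ n : ℕ, c ≠ -(n : ℝ)) (n : ℕ) : poch c n ≠ 0 := by
  rw [poch, Ne, ascPochhammer_eval_eq_zero_iff]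
  rintro ⟨k, -, hk⟩
  exact hc k (by linarith)

lemma hypCoeff_succ (a b : ℝ) {c : ℝ} {k : ℕ} (hc : poch c (k + 1) ≠ 0) :
    ((k : ℝ) + 1) * (k + c) *
        (poch a (k + 1) * poch b (k + 1) / ((k + 1).factorial * poch c (k + 1)))
      = (k + a) * (k + b) * (poch a k * poch b k / (k.factorial * poch c k)) := by
  rw [poch_succ] at hc
  obtain ⟨hck, hck'⟩ := mul_ne_zero_iff.mp hc
  have hk : (k.factorial : ℝ) ≠ 0 := by positivity
  rw [poch_succ, poch_succ, poch_succ, Nat.factorial_succ]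
  push_cast
  field_simp
  ring

/-- The coefficient of `xⁿ` in `log (1 - x) * ∑ k, w k * x ^ k`. -/
noncomputable def logCoeff (w : ℕ → ℝ) (n : ℕ) : ℝ := -∑ k ∈ range n, w k / ((n : ℝ) - k)

lemma logCoeff_zero (w : ℕ → ℝ) : logCoeff w 0 = 0 := by simp [logCoeff]

lemma logCoeff_one (w : ℕ → ℝ) : logCoeff w 1 = -w 0 := by simp [logCoeff]

section ThreeTerm

variable {a b c : ℝ} {w : ℕ → ℝ}

lemma sum_three_term_telescope
    (hrec : ∀ k : ℕ, ((k : ℝ) + 1) * (k + c) * w (k + 1) = (k + a) * (k + b) * w k) (m : ℕ) :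
    ((m : ℝ) + 2) * (m + 1 + c) * ∑ k ∈ range m, w k / ((m : ℝ) + 2 - k)
      - (2 * ((m : ℝ) + 1) ^ 2 + (a + b + c - 1) * (m + 1) + a * b)
          * ∑ k ∈ range m, w k / ((m : ℝ) + 1 - k)
      + ((m : ℝ) + a) * (m + b) * ∑ k ∈ range m, w k / ((m : ℝ) - k)
      = m * (m + c - 1) / 2 * w m := by
  set D : ℕ → ℝ := fun k => k * (k + c - 1) * w k / (((m : ℝ) + 1 - k) * (m + 2 - k))
  have hterm : ∀ k ∈ range m,
      ((m : ℝ) + 2) * (m + 1 + c) * (w k / ((m : ℝ) + 2 - k))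
        - (2 * ((m : ℝ) + 1) ^ 2 + (a + b + c - 1) * (m + 1) + a * b) * (w k / ((m : ℝ) + 1 - k))
        + ((m : ℝ) + a) * (m + b) * (w k / ((m : ℝ) - k)) = D (k + 1) - D k := by
    intro k hk
    have hkm : (k : ℝ) < m := by exact_mod_cast mem_range.mp hk
    have h0 : (m : ℝ) - k ≠ 0 := by linarith
    have h1 : (m : ℝ) + 1 - k ≠ 0 := by linarith
    have h2 : (m : ℝ) + 2 - k ≠ 0 := by linarith
    have hD : D (k + 1) = (k + a) * (k + b) * w k / (((m : ℝ) - k) * (m + 1 - k)) := by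
      simp only [D]
      rw [← hrec k]
      push_cast
      ring_nf
    rw [hD]
    simp only [D]
    field_simp
    ring
  have hDm : D m = m * (m + c - 1) / 2 * w m := by
    simp only [D]
    ring_nf
  rw [mul_sum, mul_sum, mul_sum, ← sum_sub_distrib, ← sum_add_distrib, sum_congr rfl hterm,
    sum_range_sub, hDm]
  simp [D]

lemma logCoeff_three_term
    (hrec : ∀ k : ℕ, ((k : ℝ) + 1) * (k + c) * w (k + 1) = (k + a) * (k + b) * w k) (m : ℕ) :
    ((m : ℝ) + 2) * (m + 1 + c) * logCoeff w (m + 2)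
      - (2 * ((m : ℝ) + 1) ^ 2 + (a + b + c - 1) * (m + 1) + a * b) * logCoeff w (m + 1)
      + ((m : ℝ) + a) * (m + b) * logCoeff w m
      = (((m : ℝ) + 1 + a) * (m + 1 + b) - 1) * w m - ((m : ℝ) + 2) * (m + 1 + c) * w (m + 1) := by
  have htel := sum_three_term_telescope hrec m
  simp only [logCoeff, sum_range_succ]
  push_cast
  linear_combination -htel

end ThreeTerm

theorem v_recurrence (a b c : ℝ) (hc : ∀ n : ℕ, c ≠ -(n : ℝ))
    (w v : ℕ → ℝ)
    (hw : ∀ n, w n = poch a n * poch b n / (n.factorial * poch c n))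
    (hv : ∀ n, v n = -∑ k ∈ Finset.range n, w k / ((n : ℝ) - (k : ℝ))) :
    v 0 = 0 ∧ v 1 = -1 ∧
      ∀ n : ℕ, 1 ≤ n → (n : ℝ) + a - 1 ≠ 0 → (n : ℝ) + b - 1 ≠ 0 →
        v (n + 1) =
          2 * ((2 * (n : ℝ) ^ 2 + (a + b + c - 1) * (n : ℝ) + a * b)
              / (2 * ((n : ℝ) + 1) * ((n : ℝ) + c))) * v n
          - (((n : ℝ) + a - 1) * ((n : ℝ) + b - 1)
              / (((n : ℝ) + 1) * ((n : ℝ) + c))) * v (n - 1)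
          + (((c - a - b) * (n : ℝ) ^ 2 + (a + b - 2 * a * b) * (n : ℝ)
                - c * (a - 1) * (b - 1))
              / (((n : ℝ) + 1) * ((n : ℝ) + a - 1) * ((n : ℝ) + b - 1) * ((n : ℝ) + c)))
            * w n := by
  have hrec : ∀ k : ℕ, ((k : ℝ) + 1) * (k + c) * w (k + 1) = (k + a) * (k + b) * w k := by
    intro k
    rw [hw, hw]
    exact hypCoeff_succ a b (poch_ne_zero hc (k + 1))
  obtain rfl : v = logCoeff w := funext hv
  have hw0 : w 0 = 1 := by simp [hw, poch]
  refine ⟨logCoeff_zero w, by rw [logCoeff_one, hw0], ?_⟩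
  rintro (_ | m) hm ha hb
  · exact absurd hm (by norm_num)
  have hmc : (m : ℝ) + 1 + c ≠ 0 := by exact_mod_cast hc (m + 1) ∘ eq_neg_of_add_eq_zero_right
  have hthree := logCoeff_three_term hrec m
  push_cast at ha hb ⊢
  field_simp
  linear_combination
    ((m : ℝ) + a) * (m + b) * hthree - (((m : ℝ) + 1 + a) * (m + 1 + b) - 1) * hrec m
end

section
/- Let a ∈ (0,1), b > 0. Then 2F(-a,b;2b;t) - (1-t)F(1-a,b+1;2b+1;t) = F(1-a,b;2b+1;t) for all t ∈ (-1,1). -/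
/-!
All three series converge on `(-1, 1)` by the radius-of-convergence theorem for `₂F₁`. Written as
`2 F(-a,b;2b;t) - F(1-a,b+1;2b+1;t) - F(1-a,b;2b+1;t) = -t F(1-a,b+1;2b+1;t)`, the identity is
compared coefficientwise: the constant terms cancel, and after factoring out
`(1-a)_n (b+1)_n / (2b+1)_{n+1} · t^{n+1} / (n+1)!` the coefficients of `t^{n+1}` satisfy a
rational identity in `a`, `b`, `n`.
-/

open Polynomial

lemma poch_zero (x : ℝ) : poch x 0 = 1 := by simp [poch]

lemma poch_succ_right (x : ℝ) (n : ℕ) : poch x (n + 1) = poch x n * (x + n) := by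
  simp [poch, ascPochhammer_succ_right]

lemma poch_succ_left (x : ℝ) (n : ℕ) : poch x (n + 1) = x * poch (x + 1) n := by
  simp [poch, ascPochhammer_succ_left, eval_comp]

lemma poch_pos {x : ℝ} (hx : 0 < x) (n : ℕ) : 0 < poch x n := ascPochhammer_pos n x hx

noncomputable def hypFTerm (a b c z : ℝ) (n : ℕ) : ℝ :=
  poch a n * poch b n / poch c n * z ^ n / n.factorial

lemma hypF_eq_tsum (a b c z : ℝ) : hypF a b c z = ∑' n, hypFTerm a b c z n := rfl

lemma hypFTerm_zero (a b c z : ℝ) : hypFTerm a b c z 0 = 1 := by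
  simp [hypFTerm, poch_zero]

lemma hypFTerm_eq_ordinaryHypergeometricSeries (a b c z : ℝ) (n : ℕ) :
    hypFTerm a b c z n = ordinaryHypergeometricSeries ℝ a b c n fun _ => z := by
  rw [ordinaryHypergeometricSeries_apply_eq, smul_eq_mul, hypFTerm, poch, poch, poch]
  ring

/-- If a parameter is a nonpositive integer the series terminates (for `c` through the junk value
`x / 0 = 0`); otherwise its radius of convergence is `1`. -/
lemma summable_hypFTerm (a b c : ℝ) {z : ℝ} (hz : |z| < 1) : Summable (hypFTerm a b c z) := by
  have hradius : 1 ≤ (ordinaryHypergeometricSeries ℝ a b c).radius := by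
    by_cases habc : ∀ k : ℕ, (k : ℝ) ≠ -a ∧ (k : ℝ) ≠ -b ∧ (k : ℝ) ≠ -c
    · exact (ordinaryHypergeometricSeries_radius_eq_one ℝ a b c habc).ge
    simp only [not_forall, not_and_or, not_not] at habc
    obtain ⟨k, hk | hk | hk⟩ := habc
    · simp [neg_eq_iff_eq_neg.mp hk.symm, ordinaryHypergeometric_radius_top_of_neg_nat₁]
    · simp [neg_eq_iff_eq_neg.mp hk.symm, ordinaryHypergeometric_radius_top_of_neg_nat₂]
    · simp [neg_eq_iff_eq_neg.mp hk.symm, ordinaryHypergeometric_radius_top_of_neg_nat₃]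
  have hz' : z ∈ Metric.eball 0 (ordinaryHypergeometricSeries ℝ a b c).radius := by
    rw [mem_eball_zero_iff]
    exact lt_of_lt_of_le (by rwa [Real.enorm_eq_ofReal_abs, ENNReal.ofReal_lt_one]) hradius
  rw [funext (hypFTerm_eq_ordinaryHypergeometricSeries a b c z)]
  exact (ordinaryHypergeometricSeries ℝ a b c).summable hz'

lemma hypFTerm_contiguous_succ (a : ℝ) {b : ℝ} (hb : 0 < b) (t : ℝ) (n : ℕ) :
    2 * hypFTerm (-a) b (2 * b) t (n + 1) - hypFTerm (1 - a) (b + 1) (2 * b + 1) t (n + 1)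
      - hypFTerm (1 - a) b (2 * b + 1) t (n + 1)
      = -t * hypFTerm (1 - a) (b + 1) (2 * b + 1) t n := by
  have hpoch : poch (2 * b + 1) n ≠ 0 := (poch_pos (by linarith) n).ne'
  have hlast : 2 * b + 1 + (n : ℝ) ≠ 0 := by positivity
  simp only [hypFTerm, poch_succ_left (-a), poch_succ_left b, poch_succ_left (2 * b),
    poch_succ_right (1 - a), poch_succ_right (b + 1), poch_succ_right (2 * b + 1),
    show -a + 1 = 1 - a by ring, pow_succ, Nat.factorial_succ, Nat.cast_mul, Nat.cast_succ]
  field_simp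
  ring

theorem hypF_combination_identity_general (a b : ℝ) (hb : 0 < b) :
    ∀ t ∈ Set.Ioo (-1 : ℝ) 1,
      2 * hypF (-a) b (2 * b) t - (1 - t) * hypF (1 - a) (b + 1) (2 * b + 1) t
        = hypF (1 - a) b (2 * b + 1) t := by
  rintro t ⟨ht₁, ht₂⟩
  have ht : |t| < 1 := abs_lt.mpr ⟨ht₁, ht₂⟩
  set F₁ := hypFTerm (-a) b (2 * b) t
  set F₂ := hypFTerm (1 - a) (b + 1) (2 * b + 1) t
  set F₃ := hypFTerm (1 - a) b (2 * b + 1) t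
  have hS₁ : Summable F₁ := summable_hypFTerm _ _ _ ht
  have hS₂ : Summable F₂ := summable_hypFTerm _ _ _ ht
  have hS₃ : Summable F₃ := summable_hypFTerm _ _ _ ht
  have hS : Summable fun n => 2 * F₁ n - F₂ n - F₃ n := ((hS₁.mul_left 2).sub hS₂).sub hS₃
  have hshift : ∑' n, (2 * F₁ n - F₂ n - F₃ n) = -t * ∑' n, F₂ n := by
    rw [hS.tsum_eq_zero_add, ← tsum_mul_left]
    simp only [F₁, F₂, F₃, hypFTerm_zero, hypFTerm_contiguous_succ a hb]
    ring
  rw [((hS₁.mul_left 2).sub hS₂).tsum_sub hS₃, (hS₁.mul_left 2).tsum_sub hS₂,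
    tsum_mul_left] at hshift
  simp only [hypF_eq_tsum]
  linear_combination hshift

theorem hypF_combination_identity (a b : ℝ) (ha : a ∈ Set.Ioo (0 : ℝ) 1) (hb : 0 < b) :
    ∀ t ∈ Set.Ioo (-1 : ℝ) 1,
      2 * hypF (-a) b (2 * b) t - (1 - t) * hypF (1 - a) (b + 1) (2 * b + 1) t
        = hypF (1 - a) b (2 * b + 1) t :=
  hypF_combination_identity_general a b hb
end
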